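/- For the maximally correlated pair (X, Y) produced by the paper's correlated perturbation (the antitone coupling of the two LDP-FL marginals): Cov(X, Y) = −(w_i − (c − r·α(ε)))·(w_j − (c − r·α(ε))) if w_i + w_j ≤ 2c, and Cov(X, Y) = −(w_i − (c + r·α(ε)))·(w_j − (c + r·α(ε))) if w_i + w_j ≥ 2c. In particular Cov(X, Y) ≤ 0. -/

import Mathlib

/- In the antitone coupling every cell of the joint table is an affine function of the single
cell `M = max 0 (P_A + P_B - 1)`, so `Cov(X, Y) = (2a)² (M - P_A P_B)`. Since `2a P = w - (c - a)`
and `2a (1 - P) = (c + a) - w`, the two cases `M = 0` and `M = P_A + P_B - 1` give the two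
formulas, and the Fréchet bound `M ≤ P_A P_B` gives `Cov(X, Y) ≤ 0`. -/

open Real Set

/-- `α(ε) = (e^ε + 1)/(e^ε − 1)`. -/
noncomputable def alphaFn (ε : ℝ) : ℝ := (Real.exp ε + 1) / (Real.exp ε - 1)

/-- The LDP-FL marginal `P(output = c + rα(ε))` at input `u`. -/
noncomputable def qOf (c r ε u : ℝ) : ℝ := 1 / 2 + (u - c) / (2 * r * alphaFn ε)

/-- The output level associated with a Boolean outcome: `true ↦ c + rα(ε)`, `false ↦ c − rα(ε)`. -/
noncomputable def valOf (c r ε : ℝ) (b : Bool) : ℝ :=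
  if b then c + r * alphaFn ε else c - r * alphaFn ε

/-- The joint pmf of the maximally (negatively) correlated pair `(X, Y)` produced by the
paper's correlated perturbation (the antitone coupling of the two LDP-FL marginals
`P_A = qOf c r ε wi`, `P_B = qOf c r ε wj`); `true ↦ c + rα(ε)`, `false ↦ c − rα(ε)`. -/
noncomputable def jpCor (c r ε wi wj : ℝ) (b b' : Bool) : ℝ :=
  if b then
    (if b' then max 0 (qOf c r ε wi + qOf c r ε wj - 1)
     else min (qOf c r ε wi) (1 - qOf c r ε wj))
  else
    (if b' then min (1 - qOf c r ε wi) (qOf c r ε wj)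
     else max 0 (1 - qOf c r ε wi - qOf c r ε wj))

/-- `Cov(X, Y) = E[XY] − E[X]·E[Y]` for the maximally correlated pair. -/
noncomputable def covCor (c r ε wi wj : ℝ) : ℝ :=
  (∑ b : Bool, ∑ b' : Bool, jpCor c r ε wi wj b b' * valOf c r ε b * valOf c r ε b') -
    (∑ b : Bool, ∑ b' : Bool, jpCor c r ε wi wj b b' * valOf c r ε b) *
      (∑ b : Bool, ∑ b' : Bool, jpCor c r ε wi wj b b' * valOf c r ε b') 

lemma min_eq_sub_max_zero (p q : ℝ) : min p (1 - q) = p - max 0 (p + q - 1) := by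
  rw [← min_sub_sub_left]; ring_nf

lemma max_zero_neg_eq (s : ℝ) : max 0 (-s) = max 0 s - s := by
  rw [← max_sub_sub_right]; ring_nf; exact max_comm _ _

lemma max_zero_add_sub_one_le_mul {p q : ℝ} (hp : p ∈ Icc (0 : ℝ) 1) (hq : q ∈ Icc (0 : ℝ) 1) :
    max 0 (p + q - 1) ≤ p * q :=
  max_le (mul_nonneg hp.1 hq.1) (by nlinarith [mul_nonneg (sub_nonneg.2 hp.2) (sub_nonneg.2 hq.2)])

lemma one_lt_alphaFn {ε : ℝ} (hε : 0 < ε) : 1 < alphaFn ε := by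
  have he : 1 < Real.exp ε := Real.one_lt_exp_iff.2 hε
  rw [alphaFn, one_lt_div (by linarith)]
  linarith

section Coupling

variable {c r ε : ℝ}

lemma two_mul_qOf (ha : r * alphaFn ε ≠ 0) (w : ℝ) :
    2 * r * alphaFn ε * qOf c r ε w = w - (c - r * alphaFn ε) := by
  obtain ⟨hr, hα⟩ := mul_ne_zero_iff.1 ha
  rw [qOf]; field_simp; ring

lemma qOf_mem_Icc (hr : 0 < r) (hε : 0 < ε) {w : ℝ} (hw : w ∈ Icc (c - r) (c + r)) :
    qOf c r ε w ∈ Icc (0 : ℝ) 1 := by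
  have hra : r < r * alphaFn ε := lt_mul_of_one_lt_right hr (one_lt_alphaFn hε)
  have hq := two_mul_qOf (c := c) (hr.trans hra).ne' w
  constructor <;> nlinarith [hw.1, hw.2]

lemma covCor_eq (c r ε wi wj : ℝ) :
    covCor c r ε wi wj = (2 * r * alphaFn ε) ^ 2 *
      (max 0 (qOf c r ε wi + qOf c r ε wj - 1) - qOf c r ε wi * qOf c r ε wj) := by
  simp only [covCor, jpCor, valOf, Fintype.sum_bool, if_true, Bool.false_eq_true, if_false]
  set p := qOf c r ε wi
  set q := qOf c r ε wj
  have hmin_swap : min (1 - p) q = q - max 0 (p + q - 1) := by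
    rw [min_comm, min_eq_sub_max_zero, add_comm]
  have hmax_neg : max 0 (1 - p - q) = max 0 (p + q - 1) - (p + q - 1) := by
    rw [← max_zero_neg_eq]; ring_nf
  rw [min_eq_sub_max_zero, hmin_swap, hmax_neg]
  ring

end Coupling

/-- for the maximally correlated pair `(X, Y)`,
`Cov(X, Y) = −(wi − (c − rα))(wj − (c − rα))` if `wi + wj ≤ 2c`, and
`Cov(X, Y) = −(wi − (c + rα))(wj − (c + rα))` if `wi + wj ≥ 2c`; in particular
`Cov(X, Y) ≤ 0`. -/
theorem stmt12 (c r ε : ℝ) (hr : 0 < r) (hε : 0 < ε)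
    (wi wj : ℝ) (hwi : wi ∈ Icc (c - r) (c + r)) (hwj : wj ∈ Icc (c - r) (c + r)) :
    (wi + wj ≤ 2 * c →
      covCor c r ε wi wj =
        -((wi - (c - r * alphaFn ε)) * (wj - (c - r * alphaFn ε)))) ∧
    (2 * c ≤ wi + wj →
      covCor c r ε wi wj =
        -((wi - (c + r * alphaFn ε)) * (wj - (c + r * alphaFn ε)))) ∧
    covCor c r ε wi wj ≤ 0 := by
  have ha : 0 < r * alphaFn ε := mul_pos hr (zero_lt_one.trans (one_lt_alphaFn hε))
  have hpi := two_mul_qOf (c := c) ha.ne' wi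
  have hpj := two_mul_qOf (c := c) ha.ne' wj
  rw [covCor_eq]
  refine ⟨fun h => ?_, fun h => ?_, ?_⟩
  · rw [max_eq_left (by nlinarith)]
    linear_combination -(2 * r * alphaFn ε * qOf c r ε wj) * hpi - (wi - (c - r * alphaFn ε)) * hpj
  · rw [max_eq_right (by nlinarith)]
    linear_combination (2 * r * alphaFn ε - 2 * r * alphaFn ε * qOf c r ε wj) * hpi -
      (wi - (c + r * alphaFn ε)) * hpj
  · exact mul_nonpos_of_nonneg_of_nonpos (sq_nonneg _) (sub_nonpos.2
      (max_zero_add_sub_one_le_mul (qOf_mem_Icc hr hε hwi) (qOf_mem_Icc hr hε hwj)))
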